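/- arXiv:2601.07116 — 5 statements merged into one kernel-verified Lean document; each statement's English description precedes it below -/
import Mathlib

section
/- Let S be a semigroup with a zero element 0, and define an addition on S by a + a = a and a + b = 0 for all distinct a, b ∈ S. Then (S, +, ·) is an additively idempotent semiring if and only if S is 0-cancellative, i.e., for all a, b, c ∈ S: ab = ac ≠ 0 implies b = c, and ab = cb ≠ 0 implies a = c. -/
/-- A semigroup with zero, equipped with the "flat" addition (`a + a = a`,
`a + b = 0` for `a ≠ b`), is an ai-semiring iff it is 0-cancellative. -/
theorem stmt4 {S : Type*} [Mul S]
    (mul_assoc : ∀ a b c : S, a * b * c = a * (b * c))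
    (z : S) (hz : ∀ a : S, z * a = z ∧ a * z = z)
    (add : S → S → S)
    (hadd_eq : ∀ a : S, add a a = a)
    (hadd_ne : ∀ a b : S, a ≠ b → add a b = z) :
    ((∀ a b c : S, add (add a b) c = add a (add b c)) ∧
     (∀ a b : S, add a b = add b a) ∧
     (∀ a : S, add a a = a) ∧
     (∀ a b c : S, a * add b c = add (a * b) (a * c)) ∧
     (∀ a b c : S, add a b * c = add (a * c) (b * c)))
    ↔
    ((∀ a b c : S, a * b = a * c → a * b ≠ z → b = c) ∧
     (∀ a b c : S, a * b = c * b → a * b ≠ z → a = c)) := by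
  constructor
  · rintro ⟨-, -, -, hld, hrd⟩
    constructor
    · intro a b c h hne
      by_contra hbc
      have := hld a b c
      rw [hadd_ne b c hbc, (hz a).2, ← h, hadd_eq] at this
      exact hne this.symm
    · intro a b c h hne
      by_contra hac
      have := hrd a c b
      rw [hadd_ne a c hac, (hz b).1, ← h, hadd_eq] at this
      exact hne this.symm
  · rintro ⟨hl, hr⟩
    have addz : ∀ a : S, add a z = z := by
      intro a
      by_cases h : a = z
      · rw [h, hadd_eq]
      · exact hadd_ne a z h
    have zadd : ∀ a : S, add z a = z := by
      intro a
      by_cases h : z = a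
      · rw [← h, hadd_eq]
      · exact hadd_ne z a h
    have assoc : ∀ a b c : S, add (add a b) c = add a (add b c) := by
      intro a b c
      by_cases hab : a = b
      · subst hab
        rw [hadd_eq]
        by_cases hac : a = c
        · subst hac; rw [hadd_eq, hadd_eq]
        · rw [hadd_ne a c hac, addz]
      · rw [hadd_ne a b hab, zadd]
        by_cases hbc : b = c
        · subst hbc
          rw [hadd_eq, hadd_ne a b hab]
        · rw [hadd_ne b c hbc, addz]
    have comm : ∀ a b : S, add a b = add b a := by
      intro a b
      by_cases hab : a = b
      · subst hab; rfl
      · rw [hadd_ne a b hab, hadd_ne b a (Ne.symm hab)]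
    refine ⟨assoc, comm, hadd_eq, ?_, ?_⟩
    · intro a b c
      by_cases hbc : b = c
      · subst hbc; rw [hadd_eq, hadd_eq]
      · rw [hadd_ne b c hbc, (hz a).2]
        by_cases h : a * b = a * c
        · rw [← h, hadd_eq]
          by_contra hne
          exact hbc (hl a b c h (Ne.symm hne))
        · rw [hadd_ne _ _ h]
    · intro a b c
      by_cases hab : a = b
      · subst hab; rw [hadd_eq, hadd_eq]
      · rw [hadd_ne a b hab, (hz c).1]
        by_cases h : a * c = b * c
        · rw [← h, hadd_eq]
          by_contra hne
          exact hab (hr a c b h (Ne.symm hne))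
        · rw [hadd_ne _ _ h]
end

section
/- For any two distinct positive integers m and n, the word w_n is w_m-free; that is, there is no semigroup substitution φ (a homomorphism from the free semigroup to itself sending letters to nonempty words) such that φ(w_m) is a factor of w_n. -/
/-- The letter `xᵢ`. -/
def X (i : ℕ) : ℕ ⊕ ℕ := Sum.inl i

/-- The letter `yᵢ`. -/
def Y (i : ℕ) : ℕ ⊕ ℕ := Sum.inr i

/-- The word `wₙ = y₀x₁x₂y₀ (∏_{i=1}^n yᵢx_{i+2}yᵢ) y_{n+1}x_{n+3}x_{n+4}y_{n+1}`. -/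
def wordW (n : ℕ) : List (ℕ ⊕ ℕ) :=
  [Y 0, X 1, X 2, Y 0] ++
  ((List.range n).flatMap fun k => [Y (k+1), X (k+3), Y (k+1)]) ++
  [Y (n+1), X (n+3), X (n+4), Y (n+1)]

/-- The letter at position `p` in `wordW n`. -/
def g (n p : ℕ) : ℕ ⊕ ℕ :=
  if p = 0 then Y 0 else if p = 1 then X 1 else if p = 2 then X 2
  else if p = 3 then Y 0
  else if p < 3*n+4 then (if (p-4) % 3 = 1 then X ((p-4)/3+3) else Y ((p-4)/3+1))
  else if p = 3*n+4 then Y (n+1) else if p = 3*n+5 then X (n+3)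
  else if p = 3*n+6 then X (n+4) else Y (n+1)

lemma mid_eq (N : ℕ) :
    (List.range N).flatMap (fun k => [Y (k+1), X (k+3), Y (k+1)]) =
      (List.range (3*N)).map (fun p => if p % 3 = 1 then X (p/3+3) else Y (p/3+1)) := by
  induction N with
  | zero => simp
  | succ N ih =>
    rw [List.range_succ, List.flatMap_append, ih]
    have h3 : 3*(N+1) = 3*N + 3 := by ring
    rw [h3, List.range_add, List.map_append, List.map_map]
    have r3 : List.range 3 = [0,1,2] := rfl
    rw [r3]
    simp only [List.map_cons, List.map_nil, Function.comp_apply, List.flatMap_cons,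
      List.flatMap_nil, List.append_nil]
    congr 1
    rw [if_neg (by omega), if_pos (by omega), if_neg (by omega)]
    simp only [X, Y, List.cons.injEq, Sum.inl.injEq, Sum.inr.injEq, and_true]
    omega

lemma g_mid (n p : ℕ) (hp : p < 3*n) :
    g n (4+p) = if p % 3 = 1 then X (p/3+3) else Y (p/3+1) := by
  unfold g
  rw [if_neg (by omega), if_neg (by omega), if_neg (by omega), if_neg (by omega),
    if_pos (by omega)]
  have h : 4 + p - 4 = p := by omega
  rw [h]

lemma P1 (n : ℕ) : wordW n = (List.range (3*n+8)).map (g n) := by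
  have h : 3*n+8 = 4 + 3*n + 4 := by omega
  rw [h, List.range_add, List.range_add, List.map_append, List.map_append,
    List.map_map, List.map_map]
  have hhead : (List.range 4).map (g n) = [Y 0, X 1, X 2, Y 0] := by
    have r4 : List.range 4 = [0,1,2,3] := rfl
    rw [r4]; rfl
  have hmid : (List.range (3*n)).map (g n ∘ (4 + ·)) =
      (List.range (3*n)).map (fun p => if p % 3 = 1 then X (p/3+3) else Y (p/3+1)) :=
    List.map_congr_left (fun p hp => g_mid n p (List.mem_range.mp hp))
  have htail : (List.range 4).map (g n ∘ ((4 + 3*n) + ·)) =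
      [Y (n+1), X (n+3), X (n+4), Y (n+1)] := by
    have r4 : List.range 4 = [0,1,2,3] := rfl
    rw [r4]
    simp only [List.map_cons, List.map_nil, Function.comp_apply]
    have t0 : g n (4 + 3*n + 0) = Y (n+1) := by
      unfold g
      rw [if_neg (by omega), if_neg (by omega), if_neg (by omega), if_neg (by omega), if_neg (by omega), if_pos (by omega)]
    have t1 : g n (4 + 3*n + 1) = X (n+3) := by
      unfold g
      rw [if_neg (by omega), if_neg (by omega), if_neg (by omega), if_neg (by omega), if_neg (by omega), if_neg (by omega), if_pos (by omega)]
    have t2 : g n (4 + 3*n + 2) = X (n+4) := by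
      unfold g
      rw [if_neg (by omega), if_neg (by omega), if_neg (by omega), if_neg (by omega), if_neg (by omega), if_neg (by omega), if_neg (by omega), if_pos (by omega)]
    have t3 : g n (4 + 3*n + 3) = Y (n+1) := by
      unfold g
      rw [if_neg (by omega), if_neg (by omega), if_neg (by omega), if_neg (by omega), if_neg (by omega), if_neg (by omega), if_neg (by omega), if_neg (by omega)]
    rw [t0, t1, t2, t3]
  rw [hhead, hmid, htail, wordW, mid_eq]

lemma g_cases (n p : ℕ) (hp : p < 3*n+8) :
    (g n p = Y 0 ∧ p = 0) ∨ (g n p = X 1 ∧ p = 1) ∨ (g n p = X 2 ∧ p = 2) ∨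
    (g n p = Y 0 ∧ p = 3) ∨
    (g n p = X ((p-4)/3+3) ∧ (4 ≤ p ∧ p < 3*n+4 ∧ (p-4) % 3 = 1)) ∨
    (g n p = Y ((p-4)/3+1) ∧ (4 ≤ p ∧ p < 3*n+4 ∧ (p-4) % 3 ≠ 1)) ∨
    (g n p = Y (n+1) ∧ p = 3*n+4) ∨ (g n p = X (n+3) ∧ p = 3*n+5) ∨
    (g n p = X (n+4) ∧ p = 3*n+6) ∨ (g n p = Y (n+1) ∧ p = 3*n+7) := by
  unfold g
  split_ifs with c1 c2 c3 c4 c5 c6 c7 c8 c9 <;>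
    simp only [X, Y, Sum.inl.injEq, Sum.inr.injEq, reduceCtorEq, false_and, and_false,
      true_and, and_true, false_or, or_false, eq_self_iff_true] <;>
    omega

lemma lemX (n p q i : ℕ) (hp : p < 3*n+8) (hq : q < 3*n+8)
    (h1 : g n p = X i) (h2 : g n q = X i) : p = q := by
  rcases g_cases n p hp with ⟨e,he⟩|⟨e,he⟩|⟨e,he⟩|⟨e,he⟩|⟨e,he⟩|⟨e,he⟩|⟨e,he⟩|⟨e,he⟩|⟨e,he⟩|⟨e,he⟩ <;>
  rcases g_cases n q hq with ⟨f,hf⟩|⟨f,hf⟩|⟨f,hf⟩|⟨f,hf⟩|⟨f,hf⟩|⟨f,hf⟩|⟨f,hf⟩|⟨f,hf⟩|⟨f,hf⟩|⟨f,hf⟩ <;>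
  rw [e] at h1 <;> rw [f] at h2 <;>
  simp only [X, Y, Sum.inl.injEq, Sum.inr.injEq, reduceCtorEq] at h1 h2 <;>
  omega

lemma lemY_char (n p d j : ℕ) (hb : p + d < 3*n+8) (hd : 1 ≤ d)
    (h1 : g n p = Y j) (h2 : g n (p+d) = Y j) :
    (p = 0 ∧ d = 3 ∧ j = 0) ∨
    (p = 3*j+1 ∧ 1 ≤ j ∧ j ≤ n ∧ d = 2) ∨
    (p = 3*n+4 ∧ d = 3 ∧ j = n+1) := by
  rcases g_cases n p (by omega) with ⟨e,he⟩|⟨e,he⟩|⟨e,he⟩|⟨e,he⟩|⟨e,he⟩|⟨e,he⟩|⟨e,he⟩|⟨e,he⟩|⟨e,he⟩|⟨e,he⟩ <;>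
  rcases g_cases n (p+d) hb with ⟨f,hf⟩|⟨f,hf⟩|⟨f,hf⟩|⟨f,hf⟩|⟨f,hf⟩|⟨f,hf⟩|⟨f,hf⟩|⟨f,hf⟩|⟨f,hf⟩|⟨f,hf⟩ <;>
  rw [e] at h1 <;> rw [f] at h2 <;>
  simp only [X, Y, Sum.inl.injEq, Sum.inr.injEq, reduceCtorEq] at h1 h2 <;>
  omega

lemma lemC (n p j k : ℕ) (hb : p + 1 < 3*n+8)
    (h1 : g n p = Y j) (h2 : g n (p+1) = Y k) : k = j + 1 := by
  rcases g_cases n p (by omega) with ⟨e,he⟩|⟨e,he⟩|⟨e,he⟩|⟨e,he⟩|⟨e,he⟩|⟨e,he⟩|⟨e,he⟩|⟨e,he⟩|⟨e,he⟩|⟨e,he⟩ <;>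
  rcases g_cases n (p+1) hb with ⟨f,hf⟩|⟨f,hf⟩|⟨f,hf⟩|⟨f,hf⟩|⟨f,hf⟩|⟨f,hf⟩|⟨f,hf⟩|⟨f,hf⟩|⟨f,hf⟩|⟨f,hf⟩ <;>
  rw [e] at h1 <;> rw [f] at h2 <;>
  simp only [X, Y, Sum.inl.injEq, Sum.inr.injEq, reduceCtorEq] at h1 h2 <;>
  omega

lemma lemY_next (n p d j : ℕ) (hb : p + d < 3*n+8) (hd : 1 ≤ d)
    (h1 : g n p = Y j) (h2 : g n (p+d) = Y j) : ∃ a, g n (p+1) = X a := by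
  have char := lemY_char n p d j hb hd h1 h2
  rcases g_cases n (p+1) (by omega) with ⟨e,he⟩|⟨e,he⟩|⟨e,he⟩|⟨e,he⟩|⟨e,he⟩|⟨e,he⟩|⟨e,he⟩|⟨e,he⟩|⟨e,he⟩|⟨e,he⟩ <;>
    first
      | exact ⟨_, e⟩
      | (exfalso
         rcases char with ⟨c1,c2,c3⟩|⟨c1,c2,c3,c4⟩|⟨c1,c2,c3⟩ <;> omega)

lemma infix_index {gg : ℕ → ℕ ⊕ ℕ} {N : ℕ} {u : List (ℕ ⊕ ℕ)}
    (h : u <:+: (List.range N).map gg) :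
    ∃ p, p + u.length ≤ N ∧ ∀ k (_ : k < u.length), u[k] = gg (p+k) := by
  obtain ⟨s, t, hst⟩ := h
  rw [List.append_assoc] at hst
  have hlen := congrArg List.length hst
  simp only [List.length_append, List.length_map, List.length_range] at hlen
  refine ⟨s.length, by omega, ?_⟩
  intro k hk
  have hk2 : s.length + k < (s ++ (u ++ t)).length := by
    simp only [List.length_append]; omega
  have e1 : (s ++ (u ++ t))[s.length + k]'hk2 = u[k] := by
    rw [List.getElem_append_right (by omega)]
    rw [List.getElem_append_left (by omega)]
    congr 1
    omega
  have e2 : (s ++ (u ++ t))[s.length + k]'hk2 = gg (s.length + k) := by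
    simp only [hst]
    simp
  rw [← e1, e2]

lemma infix_wordW {n : ℕ} {u : List (ℕ ⊕ ℕ)} (h : u <:+: wordW n) :
    ∃ p, p + u.length ≤ 3*n+8 ∧ ∀ k (_ : k < u.length), u[k] = g n (p+k) := by
  rw [P1] at h
  exact infix_index h

lemma key_occ {n p : ℕ} {w : List (ℕ ⊕ ℕ)}
    (hex : ∀ k (_ : k < w.length), w[k] = g n (p+k))
    (A B : List (ℕ ⊕ ℕ)) (x : ℕ ⊕ ℕ) (k : ℕ) (hk : A.length = k)
    (hw : w = A ++ x :: B) : g n (p + k) = x := by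
  subst hw; subst hk
  have hklt : A.length < (A ++ x :: B).length := by
    simp only [List.length_append, List.length_cons]; omega
  have h1 := hex A.length hklt
  rw [List.getElem_append_right (le_refl A.length)] at h1
  simpa using h1.symm

lemma window_infix (gg : ℕ → ℕ ⊕ ℕ) (N s l : ℕ) (h : s + l ≤ N) :
    (List.range l).map (fun k => gg (s+k)) <:+: (List.range N).map gg := by
  have hN : N = s + l + (N - s - l) := by omega
  rw [hN, List.range_add, List.range_add, List.map_append, List.map_append,
    List.map_map, List.map_map]
  exact ⟨(List.range s).map gg,
    (List.range (N - s - l)).map (gg ∘ ((s + l) + ·)), rfl⟩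

lemma flatMap_infix {u v : List (ℕ ⊕ ℕ)} (φ : (ℕ ⊕ ℕ) → List (ℕ ⊕ ℕ))
    (h : u <:+: v) : u.flatMap φ <:+: v.flatMap φ := by
  obtain ⟨s, t, rfl⟩ := h
  exact ⟨s.flatMap φ, t.flatMap φ, by simp [List.flatMap_append]⟩

lemma lemA (n : ℕ) (u z : List (ℕ ⊕ ℕ)) (hu : u ≠ [])
    (h : u ++ z ++ u <:+: wordW n) : ∃ j, u = [Y j] := by
  obtain ⟨c, u', rfl⟩ : ∃ c u', u = c :: u' := by
    cases u with
    | nil => exact absurd rfl hu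
    | cons a l => exact ⟨a, l, rfl⟩
  obtain ⟨p, hl, hex⟩ := infix_wordW h
  simp only [List.length_append, List.length_cons] at hl
  have e0 : g n (p + 0) = c :=
    key_occ hex [] (u' ++ (z ++ (c :: u'))) c 0 rfl (by simp)
  have e1 : g n (p + (u'.length + z.length + 1)) = c :=
    key_occ hex ((c :: u') ++ z) u' c (u'.length + z.length + 1)
      (by simp only [List.length_append, List.length_cons, List.length_nil]; omega) (by simp)
  rcases c with a | j
  · exfalso
    have := lemX n (p+0) (p + (u'.length + z.length + 1)) a (by omega) (by omega) e0 e1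
    omega
  · cases u' with
    | nil => exact ⟨j, rfl⟩
    | cons c' u'' =>
      exfalso
      have e2 : g n (p + 1) = c' :=
        key_occ hex [Sum.inr j] (u'' ++ (z ++ (Sum.inr j :: c' :: u''))) c' 1 rfl (by simp)
      have e3 : g n (p + ((c' :: u'').length + z.length + 2)) = c' :=
        key_occ hex (((Sum.inr j :: c' :: u'') ++ z) ++ [Sum.inr j]) u'' c'
          ((c' :: u'').length + z.length + 2)
          (by simp only [List.length_append, List.length_cons, List.length_nil]; omega) (by simp)
      simp only [List.length_cons] at hl e3
      rcases c' with a | k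
      · have := lemX n (p+1) (p + (u''.length + 1 + z.length + 2)) a (by omega) (by omega) e2 e3
        omega
      · simp only [List.length_cons] at e1
        simp only [Nat.add_zero] at e0
        obtain ⟨a, ha⟩ := lemY_next n p (u''.length + 1 + z.length + 1) j
          (by omega) (by omega) e0 e1
        rw [ha] at e2
        simp only [X] at e2
        exact absurd e2 (by simp)

lemma gevA (m i p : ℕ) (hi : i ≤ m) (hp : p = 3*i+3) : g m p = Y i := by
  rcases g_cases m p (by omega) with ⟨e,he⟩|⟨e,he⟩|⟨e,he⟩|⟨e,he⟩|⟨e,he⟩|⟨e,he⟩|⟨e,he⟩|⟨e,he⟩|⟨e,he⟩|⟨e,he⟩ <;>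
    (rw [e]; simp only [X, Y, Sum.inl.injEq, Sum.inr.injEq, reduceCtorEq]; omega)

lemma gevB (m i p : ℕ) (h1 : 1 ≤ i) (hi : i ≤ m) (hp : p = 3*i+1) : g m p = Y i := by
  rcases g_cases m p (by omega) with ⟨e,he⟩|⟨e,he⟩|⟨e,he⟩|⟨e,he⟩|⟨e,he⟩|⟨e,he⟩|⟨e,he⟩|⟨e,he⟩|⟨e,he⟩|⟨e,he⟩ <;>
    (rw [e]; simp only [X, Y, Sum.inl.injEq, Sum.inr.injEq, reduceCtorEq]; omega)

lemma gevC (m i p : ℕ) (h1 : 1 ≤ i) (hi : i ≤ m) (hp : p = 3*i+2) : g m p = X (i+2) := by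
  rcases g_cases m p (by omega) with ⟨e,he⟩|⟨e,he⟩|⟨e,he⟩|⟨e,he⟩|⟨e,he⟩|⟨e,he⟩|⟨e,he⟩|⟨e,he⟩|⟨e,he⟩|⟨e,he⟩ <;>
    (rw [e]; simp only [X, Y, Sum.inl.injEq, Sum.inr.injEq, reduceCtorEq]; omega)

lemma gevD (m i p : ℕ) (hm : 1 ≤ m) (hi : i ≤ m) (hp : p = 3*i+4) : g m p = Y (i+1) := by
  rcases g_cases m p (by omega) with ⟨e,he⟩|⟨e,he⟩|⟨e,he⟩|⟨e,he⟩|⟨e,he⟩|⟨e,he⟩|⟨e,he⟩|⟨e,he⟩|⟨e,he⟩|⟨e,he⟩ <;>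
    (rw [e]; simp only [X, Y, Sum.inl.injEq, Sum.inr.injEq, reduceCtorEq]; omega)

lemma pair_infix (m i : ℕ) (hm : 1 ≤ m) (hi : i ≤ m) :
    [Y i, Y (i+1)] <:+: wordW m := by
  rw [P1 m]
  have h := window_infix (g m) (3*m+8) (3*i+3) 2 (by omega)
  have e : (List.range 2).map (fun k => g m (3*i+3+k)) = [Y i, Y (i+1)] := by
    have r2 : List.range 2 = [0, 1] := rfl
    rw [r2]
    simp only [List.map_cons, List.map_nil]
    rw [gevA m i (3*i+3+0) hi (by ring), gevD m i (3*i+3+1) hm hi (by ring)]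
  rwa [e] at h

lemma blockmid_infix (m i : ℕ) (h1 : 1 ≤ i) (hi : i ≤ m) :
    [Y i, X (i+2), Y i] <:+: wordW m := by
  rw [P1 m]
  have h := window_infix (g m) (3*m+8) (3*i+1) 3 (by omega)
  have e : (List.range 3).map (fun k => g m (3*i+1+k)) = [Y i, X (i+2), Y i] := by
    have r3 : List.range 3 = [0, 1, 2] := rfl
    rw [r3]
    simp only [List.map_cons, List.map_nil]
    rw [gevB m i (3*i+1+0) h1 hi (by ring), gevC m i (3*i+1+1) h1 hi (by ring),
      gevA m i (3*i+1+2) hi (by ring)]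
  rwa [e] at h

lemma block0_infix (m : ℕ) : [Y 0, X 1, X 2, Y 0] <:+: wordW m := by
  unfold wordW
  rw [List.append_assoc]
  exact (List.prefix_append _ _).isInfix

lemma blockend_infix (m : ℕ) :
    [Y (m+1), X (m+3), X (m+4), Y (m+1)] <:+: wordW m := by
  unfold wordW
  exact (List.suffix_append _ _).isInfix

/-- For distinct positive integers `m, n`, the word `wₙ` is `wₘ`-free: no image
of `wₘ` under a substitution (letters to nonempty words) is a factor of `wₙ`. -/
theorem stmt9 (m n : ℕ) (hm : 1 ≤ m) (hn : 1 ≤ n) (hmn : m ≠ n) :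
    ∀ φ : (ℕ ⊕ ℕ) → List (ℕ ⊕ ℕ), (∀ c, φ c ≠ []) →
      ¬ ((wordW m).flatMap φ <:+: wordW n) := by
  intro φ hφ hinf
  have single : ∀ i, i ≤ m+1 → ∃ j, φ (Y i) = [Y j] := by
    intro i hi
    have hblk : ∃ mid : List (ℕ ⊕ ℕ), [Y i] ++ mid ++ [Y i] <:+: wordW m := by
      rcases Nat.lt_or_ge i 1 with h0 | h1
      · have hi0 : i = 0 := by omega
        subst hi0
        exact ⟨[X 1, X 2], block0_infix m⟩
      · rcases Nat.lt_or_ge m i with h2 | h2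
        · have hiE : i = m+1 := by omega
          subst hiE
          exact ⟨[X (m+3), X (m+4)], blockend_infix m⟩
        · exact ⟨[X (i+2)], blockmid_infix m i h1 h2⟩
    obtain ⟨mid, hblk⟩ := hblk
    have h2 : φ (Y i) ++ mid.flatMap φ ++ φ (Y i) <:+: wordW n := by
      have h3 := (flatMap_infix φ hblk).trans hinf
      simpa [List.flatMap_append, List.append_assoc] using h3
    exact lemA n (φ (Y i)) (mid.flatMap φ) (hφ _) h2
  obtain ⟨j0, hj0⟩ := single 0 (by omega)
  have chain : ∀ i, i ≤ m+1 → φ (Y i) = [Y (j0 + i)] := by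
    intro i
    induction i with
    | zero => intro _; simpa using hj0
    | succ i ih =>
      intro hi
      have hii : i ≤ m := by omega
      have h1 := ih (by omega)
      obtain ⟨j', hj'⟩ := single (i+1) hi
      have hpair := (flatMap_infix φ (pair_infix m i hm hii)).trans hinf
      rw [show [Y i, Y (i+1)].flatMap φ = φ (Y i) ++ φ (Y (i+1)) by simp] at hpair
      rw [h1, hj'] at hpair
      obtain ⟨p, hl, hex⟩ := infix_wordW hpair
      have e0 : g n (p + 0) = Y (j0 + i) :=
        key_occ hex [] [Y j'] (Y (j0+i)) 0 rfl (by simp)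
      have e1 : g n (p + 1) = Y j' :=
        key_occ hex [Y (j0+i)] [] (Y j') 1 rfl (by simp)
      simp only [Nat.add_zero] at e0
      simp only [List.length_append, List.length_cons, List.length_nil] at hl
      have hC := lemC n p (j0+i) j' (by omega) e0 e1
      rw [hj', hC]
      rfl
  -- first block forces j0 ∈ {0, n+1}
  have hb0 : [Y j0] ++ (φ (X 1) ++ φ (X 2)) ++ [Y j0] <:+: wordW n := by
    have h3 := (flatMap_infix φ (block0_infix m)).trans hinf
    rw [← hj0]
    simpa [List.flatMap_append, List.append_assoc] using h3
  have l1 : 1 ≤ (φ (X 1)).length := List.length_pos_iff.mpr (hφ _)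
  have l2 : 1 ≤ (φ (X 2)).length := List.length_pos_iff.mpr (hφ _)
  obtain ⟨p, hl, hex⟩ := infix_wordW hb0
  simp only [List.length_append, List.length_cons, List.length_nil] at hl
  have e0 : g n (p + 0) = Y j0 :=
    key_occ hex [] ((φ (X 1) ++ φ (X 2)) ++ [Y j0]) (Y j0) 0 rfl (by simp)
  have e1 : g n (p + ((φ (X 1)).length + (φ (X 2)).length + 1)) = Y j0 :=
    key_occ hex ([Y j0] ++ (φ (X 1) ++ φ (X 2))) [] (Y j0)
      ((φ (X 1)).length + (φ (X 2)).length + 1)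
      (by simp only [List.length_append, List.length_cons, List.length_nil]; omega)
      (by simp)
  simp only [Nat.add_zero] at e0
  have char1 := lemY_char n p ((φ (X 1)).length + (φ (X 2)).length + 1) j0
    (by omega) (by omega) e0 e1
  -- last block forces j0 + (m+1) ∈ {0, n+1}
  have hcE := chain (m+1) (le_refl _)
  have hbE : [Y (j0 + (m+1))] ++ (φ (X (m+3)) ++ φ (X (m+4))) ++ [Y (j0 + (m+1))]
      <:+: wordW n := by
    have h3 := (flatMap_infix φ (blockend_infix m)).trans hinf
    rw [← hcE]
    simpa [List.flatMap_append, List.append_assoc] using h3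
  have l3 : 1 ≤ (φ (X (m+3))).length := List.length_pos_iff.mpr (hφ _)
  have l4 : 1 ≤ (φ (X (m+4))).length := List.length_pos_iff.mpr (hφ _)
  obtain ⟨q, hlE, hexE⟩ := infix_wordW hbE
  simp only [List.length_append, List.length_cons, List.length_nil] at hlE
  have f0 : g n (q + 0) = Y (j0 + (m+1)) :=
    key_occ hexE [] ((φ (X (m+3)) ++ φ (X (m+4))) ++ [Y (j0 + (m+1))]) (Y (j0 + (m+1))) 0 rfl
      (by simp)
  have f1 : g n (q + ((φ (X (m+3))).length + (φ (X (m+4))).length + 1)) = Y (j0 + (m+1)) :=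
    key_occ hexE ([Y (j0 + (m+1))] ++ (φ (X (m+3)) ++ φ (X (m+4)))) [] (Y (j0 + (m+1)))
      ((φ (X (m+3))).length + (φ (X (m+4))).length + 1)
      (by simp only [List.length_append, List.length_cons, List.length_nil]; omega)
      (by simp)
  simp only [Nat.add_zero] at f0
  have char2 := lemY_char n q ((φ (X (m+3))).length + (φ (X (m+4))).length + 1) (j0 + (m+1))
    (by omega) (by omega) f0 f1
  rcases char1 with c|c|c <;> rcases char2 with c'|c'|c' <;> omega
end

section
/- In the word w_n = y₀x₁x₂y₀ (∏_{i=1}^n y_i x_{i+2} y_i) y_{n+1} x_{n+3} x_{n+4} y_{n+1}, every factor (contiguous subword) of length greater than 1 occurs exactly once in w_n. -/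
/-- The number of occurrences of `u` as a factor of `w`: the number of
positions of `w` at which `u` appears. -/
def occCount (u w : List (ℕ ⊕ ℕ)) : ℕ :=
  ((List.range (w.length + 1)).filter fun i => decide (u <+: w.drop i)).length

section AdjacentPairs

variable {α : Type*}

def adjacentPairs (l : List α) : List (α × α) := l.zip l.tail

@[simp] lemma adjacentPairs_singleton (a : α) : adjacentPairs [a] = [] := rfl
@[simp] lemma adjacentPairs_cons_cons (a b : α) (l : List α) :
    adjacentPairs (a :: b :: l) = (a, b) :: adjacentPairs (b :: l) := rfl

lemma drop_adjacentPairs (i : ℕ) (l : List α) :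
    (adjacentPairs l).drop i = adjacentPairs (l.drop i) := by
  simp [adjacentPairs, List.zip, List.drop_zipWith, List.tail_drop]

lemma getElem?_adjacentPairs_of_prefix_drop {a b : α} {u l : List α} {i : ℕ}
    (h : a :: b :: u <+: l.drop i) : (adjacentPairs l)[i]? = some (a, b) := by
  obtain ⟨r, hr⟩ := h
  rw [← List.head?_drop, drop_adjacentPairs, ← hr]
  rfl

lemma eq_of_prefix_drop_of_nodup_adjacentPairs {l u : List α} (hl : (adjacentPairs l).Nodup)
    (hu : 2 ≤ u.length) {i j : ℕ} (hi : u <+: l.drop i) (hj : u <+: l.drop j) : i = j := by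
  obtain ⟨a, b, v, rfl⟩ : ∃ a b v, u = a :: b :: v := by
    match u, hu with
    | a :: b :: v, _ => exact ⟨a, b, v, rfl⟩
  have hi' := getElem?_adjacentPairs_of_prefix_drop hi
  have hlt : i < (adjacentPairs l).length := (List.getElem?_eq_some_iff.1 hi').1
  exact (List.getElem?_inj hlt hl).1 (hi'.trans (getElem?_adjacentPairs_of_prefix_drop hj).symm)

end AdjacentPairs

lemma occCount_eq_one_of_infix {u w : List (ℕ ⊕ ℕ)} (hu : u <:+: w)
    (huniq : ∀ i j, u <+: w.drop i → u <+: w.drop j → i = j) : occCount u w = 1 := by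
  obtain ⟨s, t, rfl⟩ := hu
  have hs : u <+: (s ++ u ++ t).drop s.length := by simp
  have hfilter : ∀ i ∈ List.range ((s ++ u ++ t).length + 1),
      decide (u <+: (s ++ u ++ t).drop i) = decide (i = s.length) := fun i _ =>
    decide_eq_decide.2 ⟨fun h => huniq _ _ h hs, fun h => h ▸ hs⟩
  rw [occCount, List.filter_congr hfilter, List.filter_eq, List.length_replicate,
    List.count_range, if_pos (by simp)]

/-- Sends the pair at positions `p, p + 1` of `wₙ` to `p`. The letters of `wₙ` sit at: `y₀x₁x₂y₀`
at `0..3`, `yᵢx_{i+2}yᵢ` at `3i+1..3i+3` for `1 ≤ i ≤ n`, `y_{n+1}x_{n+3}x_{n+4}y_{n+1}` at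
`3n+4..3n+7`. -/
def pairIndex : (ℕ ⊕ ℕ) × (ℕ ⊕ ℕ) → ℕ
  | (Sum.inl a, Sum.inl _) => if a = 1 then 1 else 3*a - 4
  | (Sum.inl a, Sum.inr k) => if a = k+2 then 3*k+2 else 3*k+3
  | (Sum.inr k, Sum.inl _) => if k = 0 then 0 else 3*k+1
  | (Sum.inr k, Sum.inr _) => 3*k+3

lemma map_pairIndex_adjacentPairs_blocks (s m : ℕ) (t : List (ℕ ⊕ ℕ)) :
    (adjacentPairs (Y s ::
        (((List.range' s m).flatMap fun k => [Y (k+1), X (k+3), Y (k+1)]) ++ t))).map pairIndex =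
      List.range' (3*s+3) (3*m) ++ (adjacentPairs (Y (s+m) :: t)).map pairIndex := by
  induction m generalizing s with
  | zero => simp
  | succ m ih =>
    rw [List.range'_succ, List.flatMap_cons]
    simp only [List.cons_append, List.nil_append, adjacentPairs_cons_cons, List.map_cons, ih]
    have h₁ : pairIndex (Y s, Y (s + 1)) = 3 * s + 3 := rfl
    have h₂ : pairIndex (Y (s + 1), X (s + 3)) = 3 * s + 4 := by simp [pairIndex, X, Y]; omega
    have h₃ : pairIndex (X (s + 3), Y (s + 1)) = 3 * s + 5 := by simp [pairIndex, X, Y]; omega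
    rw [h₁, h₂, h₃, show 3 * (m + 1) = 3 * m + 1 + 1 + 1 by ring,
      show s + (m + 1) = s + 1 + m by ring]
    simp only [List.range'_succ, List.cons_append]
    ring_nf

lemma map_pairIndex_adjacentPairs_wordW (n : ℕ) :
    (adjacentPairs (wordW n)).map pairIndex = List.range (3*n+7) := by
  rw [wordW, List.range_eq_range', List.append_assoc]
  simp only [List.cons_append, List.nil_append, adjacentPairs_cons_cons, List.map_cons,
    map_pairIndex_adjacentPairs_blocks, adjacentPairs_singleton, List.map_nil]
  simp only [pairIndex, X, Y]
  rw [List.range_eq_range', show 3 * n + 7 = 3 + (3 * n + 4) by ring, ← List.range'_append,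
    ← List.range'_append]
  simp [List.range'_succ]
  omega

lemma nodup_adjacentPairs_wordW (n : ℕ) : (adjacentPairs (wordW n)).Nodup :=
  .of_map pairIndex (map_pairIndex_adjacentPairs_wordW n ▸ List.nodup_range)

theorem stmt10_general (n : ℕ) :
    ∀ u : List (ℕ ⊕ ℕ), 2 ≤ u.length → u <:+: wordW n →
      occCount u (wordW n) = 1 := fun _ hu hinf =>
  occCount_eq_one_of_infix hinf fun _ _ =>
    eq_of_prefix_drop_of_nodup_adjacentPairs (nodup_adjacentPairs_wordW n) hu

/-- Every factor of `wₙ` of length greater than `1` occurs exactly once. -/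
theorem stmt10 (n : ℕ) (hn : 1 ≤ n) :
    ∀ u : List (ℕ ⊕ ℕ), 2 ≤ u.length → u <:+: wordW n →
      occCount u (wordW n) = 1 :=
  stmt10_general n
end

section
/- Let u and v be words such that v is u-free (no substitution image of u is a factor of v). Then the flat semiring S(v) satisfies the identities u x ≈ u and x u ≈ u, where x is a variable not occurring in u; that is, for every assignment of elements of S(v) to the variables, the evaluation of u in S(v) is an absorbing element times anything, i.e., the evaluation of u equals 0 or forces ux = xu = u. -/
variable {α : Type*} [DecidableEq α]

/-- The carrier of the flat semiring `S(w)`: nonempty factors of `w` plus `0 = none`. -/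
def SW (w : List α) : Type _ := Option {u : List α // u ≠ [] ∧ u <:+: w}

/-- Multiplication on `S(w)`: concatenation when the result is a factor of `w`,
and `0` otherwise. -/
def swMul (w : List α) : SW w → SW w → SW w
  | some u, some v =>
      if h : (u.1 ++ v.1) <:+: w then
        some ⟨u.1 ++ v.1, ⟨by simp [u.2.1], h⟩⟩
      else none
  | _, _ => none

/-- Evaluate a (nonempty) word in variables `V` in a magma `(S, mul)` under the
assignment `φ`; the empty word is sent to the junk value `z`. -/
def evalWith {S V : Type*} (mul : S → S → S) (z : S) (φ : V → S) : List V → S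
  | [] => z
  | h :: t => t.foldl (fun s v => mul s (φ v)) (φ h)

/-! If a word takes a nonzero value in `S(w)`, that value is the image of the word under the
substitution sending each variable to its assigned factor (and variables assigned `0`, which do
not occur in the word, to arbitrary nonempty words). As `w` is `u`-free, every value of `u` is
therefore `0`, and `0` is absorbing. -/

def IsFreeOf {V : Type*} (w : List α) (u : List V) : Prop :=
  ∀ ψ : V → List α, (∀ y, ψ y ≠ []) → ¬ (u.flatMap ψ <:+: w)

lemma evalWith_append {S V : Type*} (mul : S → S → S) (z : S) (φ : V → S)
    {l₁ : List V} (h₁ : l₁ ≠ []) (l₂ : List V) :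
    evalWith mul z φ (l₁ ++ l₂) = l₂.foldl (fun s v => mul s (φ v)) (evalWith mul z φ l₁) := by
  obtain ⟨a, t, rfl⟩ := List.exists_cons_of_ne_nil h₁
  exact List.foldl_append

section FlatSemiring

variable {V : Type*} {w : List α}

lemma swMul_none_left (s : SW w) : swMul w none s = none := by
  cases s <;> rfl

lemma swMul_none_right (s : SW w) : swMul w s none = none := by
  cases s <;> rfl

lemma swMul_eq_some {s t : SW w} {m : {u : List α // u ≠ [] ∧ u <:+: w}}
    (h : swMul w s t = some m) : ∃ a b, s = some a ∧ t = some b ∧ m.1 = a.1 ++ b.1 := by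
  match s, t, h with
  | none, _, h => exact absurd ((swMul_none_left _).symm.trans h) nofun
  | some a, none, h => exact absurd ((swMul_none_right _).symm.trans h) nofun
  | some a, some b, h =>
    change (if h : a.1 ++ b.1 <:+: w then _ else none) = some m at h
    split at h
    · cases h
      exact ⟨a, b, rfl, rfl, rfl⟩
    · cases h

lemma foldl_swMul_none (φ : V → SW w) (l : List V) :
    l.foldl (fun s y => swMul w s (φ y)) none = none := by
  induction l with
  | nil => rfl
  | cons y t ih =>
    change t.foldl _ (swMul w none (φ y)) = none
    rwa [swMul_none_left]

omit [DecidableEq α] in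
lemma exists_nonempty_lift (φ : V → SW w) {d : List α} (hd : d ≠ []) :
    ∃ ψ : V → List α, (∀ y, ψ y ≠ []) ∧ ∀ y c, φ y = some c → ψ y = c.1 := by
  refine ⟨fun y => (φ y).elim d Subtype.val, fun y => ?_, fun y c hc => by simp [hc]⟩
  dsimp only
  rcases φ y with _ | c
  exacts [hd, c.2.1]

lemma foldl_swMul_eq_some {φ : V → SW w} {ψ : V → List α}
    (hψ : ∀ y c, φ y = some c → ψ y = c.1) {l : List V} {init : SW w}
    {b : {u : List α // u ≠ [] ∧ u <:+: w}}
    (h : l.foldl (fun s y => swMul w s (φ y)) init = some b) :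
    ∃ a, init = some a ∧ b.1 = a.1 ++ l.flatMap ψ := by
  induction l generalizing init with
  | nil => exact ⟨b, h, by simp⟩
  | cons y t ih =>
    obtain ⟨m, hm, hbm⟩ := ih h
    obtain ⟨a, c, rfl, hy, hmac⟩ := swMul_eq_some hm
    exact ⟨a, rfl, by simp [hbm, hmac, hψ y c hy]⟩

lemma evalWith_swMul_eq_some {φ : V → SW w} {ψ : V → List α}
    (hψ : ∀ y c, φ y = some c → ψ y = c.1) {l : List V}
    {b : {u : List α // u ≠ [] ∧ u <:+: w}} (h : evalWith (swMul w) none φ l = some b) :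
    b.1 = l.flatMap ψ := by
  cases l with
  | nil => exact absurd h nofun
  | cons y t =>
    obtain ⟨a, hy, hba⟩ := foldl_swMul_eq_some hψ h
    simp [hba, hψ y a hy]

lemma IsFreeOf.foldl_swMul_eq_none {u : List V} (hw : IsFreeOf w u) (φ : V → SW w)
    (init : SW w) : u.foldl (fun s y => swMul w s (φ y)) init = none := by
  refine Option.eq_none_iff_forall_ne_some.mpr fun b hb => ?_
  obtain ⟨ψ, hψne, hψ⟩ := exists_nonempty_lift φ b.2.1
  obtain ⟨a, -, hba⟩ := foldl_swMul_eq_some hψ hb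
  exact hw ψ hψne ((List.suffix_append a.1 _).isInfix.trans (hba ▸ b.2.2))

lemma IsFreeOf.evalWith_swMul_eq_none {u : List V} (hw : IsFreeOf w u) (φ : V → SW w) :
    evalWith (swMul w) none φ u = none := by
  refine Option.eq_none_iff_forall_ne_some.mpr fun b hb => ?_
  obtain ⟨ψ, hψne, hψ⟩ := exists_nonempty_lift φ b.2.1
  exact hw ψ hψne (evalWith_swMul_eq_some hψ hb ▸ b.2.2)

end FlatSemiring

theorem stmt11_general {V : Type*} (v : List α) (u : List V) (hu : u ≠ [])
    (hfree : ∀ ψ : V → List α, (∀ y, ψ y ≠ []) → ¬ (u.flatMap ψ <:+: v))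
    (x : V) :
    ∀ φ : V → SW v,
      evalWith (swMul v) none φ u = none ∧
      evalWith (swMul v) none φ (u ++ [x]) = evalWith (swMul v) none φ u ∧
      evalWith (swMul v) none φ ([x] ++ u) = evalWith (swMul v) none φ u := by
  intro φ
  have hu0 : evalWith (swMul v) none φ u = none := IsFreeOf.evalWith_swMul_eq_none hfree φ
  refine ⟨hu0, ?_, ?_⟩
  · calc evalWith (swMul v) none φ (u ++ [x])
        _ = [x].foldl (fun s y => swMul v s (φ y)) (evalWith (swMul v) none φ u) :=
          evalWith_append _ _ _ hu [x]
        _ = evalWith (swMul v) none φ u := by rw [hu0]; exact foldl_swMul_none φ [x]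
  · rw [hu0]
    exact IsFreeOf.foldl_swMul_eq_none hfree φ (φ x)

/-- If `v` is `u`-free, then in the flat semiring `S(v)` every evaluation of `u`
is `0`, and hence `S(v)` satisfies the identities `ux ≈ u` and `xu ≈ u` for a
fresh variable `x`. -/
theorem stmt11 {V : Type*} (v : List α) (u : List V) (hu : u ≠ [])
    (hfree : ∀ ψ : V → List α, (∀ y, ψ y ≠ []) → ¬ (u.flatMap ψ <:+: v))
    (x : V) (hx : x ∉ u) :
    ∀ φ : V → SW v,
      evalWith (swMul v) none φ u = none ∧
      evalWith (swMul v) none φ (u ++ [x]) = evalWith (swMul v) none φ u ∧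
      evalWith (swMul v) none φ ([x] ++ u) = evalWith (swMul v) none φ u :=
  stmt11_general v u hu hfree x
end

section
/- For positive integers m, n, the flat semiring S(w_n) satisfies the identity w_m ≈ w_m′ if and only if n ≠ m, where w_m′ is obtained from w_m by swapping the letters x₁ and x₂. -/
variable {α : Type*} [DecidableEq α]

/-- The word `wₙ'`, obtained from `wₙ` by swapping `x₁` and `x₂`. -/
def wordW' (n : ℕ) : List (ℕ ⊕ ℕ) :=
  [Y 0, X 2, X 1, Y 0] ++
  ((List.range n).flatMap fun k => [Y (k+1), X (k+3), Y (k+1)]) ++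
  [Y (n+1), X (n+3), X (n+4), Y (n+1)]

/-!
Suppose some assignment `φ` gives `wₘ` a nonzero value in `S(wₙ)`. The values of the letters then
form a non-erasing substitution `σ` with `σ(wₘ)` a factor of `wₙ`. Two equal letters of `wₙ` lie at
distance 2, or at distance 3 at the two ends of the word. The first letter of `σ(y₀)` recurs at
distance at least 3 inside `σ(y₀x₁x₂y₀)`, which forces this block onto the first four letters of
`wₙ`, one letter each; likewise the last block of `wₘ` lands on the last four letters of `wₙ`. In
between, each block `yᵢ x_{i+2} yᵢ` of `wₘ` has gap 2, so `σ` maps its letters to letters, and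
comparing the lengths of the middle parts gives `3m = 3n`. The same holds for `wₘ'`, so for `m ≠ n`
both sides vanish. For `m = n` the identity assignment sends `wₙ` to itself and `wₙ'` to `0`.
-/

theorem List.getElem?_length_eq_of_eq_append {β : Type*} {l P s u S : List β} (hs : s ≠ [])
    (h : l = P ++ s ++ u ++ s ++ S) : l[P.length]? = l[P.length + (s.length + u.length)]? := by
  obtain ⟨c, s, rfl⟩ := List.exists_cons_of_ne_nil hs
  have hc : ∀ A B : List β, (A ++ c :: B)[A.length]? = some c := by simp
  have h₁ := hc P (s ++ u ++ c :: s ++ S)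
  have h₂ := hc (P ++ c :: s ++ u) (s ++ S)
  subst h
  simp only [List.append_assoc, List.cons_append, List.length_append, List.length_cons] at h₁ h₂ ⊢
  rw [h₁, ← h₂]
  congr 1
  omega

namespace SW

def toList {w : List α} : SW w → List α
  | none => []
  | some u => u.1

theorem toList_eq_nil {β : Type*} {w : List β} {x : SW w} : x.toList = [] ↔ x = none := by
  rcases x with _ | u
  · exact iff_of_true rfl rfl
  · exact iff_of_false u.2.1 (Option.some_ne_none u)

theorem toList_infix {β : Type*} {w : List β} (x : SW w) : x.toList <:+: w := by
  rcases x with _ | u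
  · exact List.nil_infix
  · exact u.2.2

theorem swMul_some_some {w : List α} (u v : {u : List α // u ≠ [] ∧ u <:+: w}) :
    swMul w (some u) (some v) =
      if h : u.1 ++ v.1 <:+: w then some ⟨u.1 ++ v.1, by simp [u.2.1], h⟩ else none :=
  rfl

theorem toList_swMul {w : List α} (x y : SW w) :
    (swMul w x y).toList =
      if x.toList ≠ [] ∧ y.toList ≠ [] ∧ x.toList ++ y.toList <:+: w then x.toList ++ y.toList
      else [] := by
  rcases x with _ | u <;> rcases y with _ | v
  · rfl
  · exact (if_neg fun h => h.1 rfl).symm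
  · exact (if_neg fun h => h.2.1 rfl).symm
  · by_cases h : u.1 ++ v.1 <:+: w
    · rw [if_pos ⟨u.2.1, v.2.1, h⟩, swMul_some_some, dif_pos h]
      rfl
    · rw [if_neg fun h' => h h'.2.2, swMul_some_some, dif_neg h]
      rfl

theorem toList_foldl_swMul {V : Type*} {w : List α} (φ : V → SW w) (t : List V) (x : SW w) :
    (t.foldl (fun s v => swMul w s (φ v)) x).toList =
      if x.toList ≠ [] ∧ (∀ b ∈ t, (φ b).toList ≠ []) ∧
          x.toList ++ t.flatMap (fun b => (φ b).toList) <:+: w then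
        x.toList ++ t.flatMap (fun b => (φ b).toList)
      else [] := by
  induction t generalizing x with
  | nil => simp [toList_infix]
  | cons a t ih =>
    rw [List.foldl_cons, ih, toList_swMul]
    have hpre : ∀ l, x.toList ++ (φ a).toList ++ l <:+: w → x.toList ++ (φ a).toList <:+: w :=
      fun l h => (List.prefix_append _ l).isInfix.trans h
    split_ifs <;> simp_all

theorem toList_evalWith_swMul {V : Type*} {w : List α} (φ : V → SW w) {u : List V}
    (hu : u ≠ []) :
    (evalWith (swMul w) none φ u).toList =
      if (∀ b ∈ u, (φ b).toList ≠ []) ∧ u.flatMap (fun b => (φ b).toList) <:+: w then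
        u.flatMap (fun b => (φ b).toList)
      else [] := by
  obtain ⟨a, t, rfl⟩ := List.exists_cons_of_ne_nil hu
  show (t.foldl (fun s v => swMul w s (φ v)) (φ a)).toList = _
  rw [toList_foldl_swMul]
  simp [and_assoc]

def identityAssignment (w : List α) (a : α) : SW w :=
  if h : [a] <:+: w then some ⟨[a], List.cons_ne_nil a [], h⟩ else none

theorem toList_identityAssignment (w : List α) (a : α) :
    (identityAssignment w a).toList = if a ∈ w then [a] else [] := by
  by_cases h : a ∈ w
  · have hw := (List.singleton_infix_iff a w).2 h
    have h' : identityAssignment w a = some ⟨[a], List.cons_ne_nil a [], hw⟩ := dif_pos hw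
    rw [h', if_pos h]
    rfl
  · have h' : identityAssignment w a = none := dif_neg (mt (List.singleton_infix_iff a w).1 h)
    rw [h', if_neg h]
    rfl

theorem toList_evalWith_identityAssignment {w u : List α} (hu : u ≠ []) :
    (evalWith (swMul w) none (identityAssignment w) u).toList = if u <:+: w then u else [] := by
  have hletters : ∀ l : List α, (∀ b ∈ l, b ∈ w) →
      l.flatMap (fun b => (identityAssignment w b).toList) = l := fun l hl => by
    rw [List.flatMap_congr fun b hb => by rw [toList_identityAssignment, if_pos (hl b hb)],
      List.flatMap_singleton']
  rw [toList_evalWith_swMul _ hu]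
  by_cases h : u <:+: w
  · have hmem := fun b (hb : b ∈ u) => h.subset hb
    rw [if_pos h, if_pos ⟨fun b hb => by simp [toList_identityAssignment, hmem b hb], by
      rwa [hletters u hmem]⟩, hletters u hmem]
  · rw [if_neg h, if_neg]
    rintro ⟨hne, hinf⟩
    have hmem : ∀ b ∈ u, b ∈ w := by simpa [toList_identityAssignment] using hne
    exact h (by rwa [hletters u hmem] at hinf)

end SW

def wordMiddle (n : ℕ) : List (ℕ ⊕ ℕ) :=
  (List.range n).flatMap fun k => [Y (k+1), X (k+3), Y (k+1)]

def wordWith (m : ℕ) (a b : ℕ ⊕ ℕ) : List (ℕ ⊕ ℕ) :=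
  [Y 0, a, b, Y 0] ++ wordMiddle m ++ [Y (m+1), X (m+3), X (m+4), Y (m+1)]

theorem wordW_eq_wordWith (m : ℕ) : wordW m = wordWith m (X 1) (X 2) := rfl

theorem wordWith_ne_nil (m : ℕ) (a b : ℕ ⊕ ℕ) : wordWith m a b ≠ [] := by
  simp [wordWith]

theorem wordMiddle_succ (n : ℕ) :
    wordMiddle (n + 1) = wordMiddle n ++ [Y (n+1), X (n+3), Y (n+1)] := by
  simp [wordMiddle, List.range_succ]

theorem wordMiddle_eq_append {m k : ℕ} (hk : k < m) :
    ∃ pre post, wordMiddle m = pre ++ [Y (k+1), X (k+3), Y (k+1)] ++ post := by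
  obtain ⟨s, t, hst⟩ := List.append_of_mem (List.mem_range.mpr hk)
  exact ⟨s.flatMap fun k => [Y (k+1), X (k+3), Y (k+1)],
    t.flatMap fun k => [Y (k+1), X (k+3), Y (k+1)], by simp [wordMiddle, hst]⟩

def middleLetter (j : ℕ) : ℕ ⊕ ℕ := if j % 3 = 1 then X (j / 3 + 3) else Y (j / 3 + 1)

theorem wordMiddle_eq_map (n : ℕ) : wordMiddle n = (List.range (3 * n)).map middleLetter := by
  induction n with
  | zero => rfl
  | succ n ih =>
    rw [wordMiddle_succ, ih, show 3 * (n + 1) = 3 * n + 3 by ring, List.range_add,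
      List.map_append, List.map_map]
    simp [middleLetter, X, Y, List.range_succ]
    omega

def wordLetter (n j : ℕ) : ℕ ⊕ ℕ :=
  if j = 1 then X 1 else if j = 2 then X 2 else if j < 4 then Y 0
  else if j < 3 * n + 4 then middleLetter (j - 4)
  else if j = 3 * n + 5 then X (n + 3) else if j = 3 * n + 6 then X (n + 4) else Y (n + 1)

theorem wordW_eq_map (n : ℕ) : wordW n = (List.range (3 * n + 8)).map (wordLetter n) := by
  rw [show 3 * n + 8 = 4 + 3 * n + 4 by ring, List.range_add, List.range_add,
    wordW_eq_wordWith, wordWith, wordMiddle_eq_map]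
  simp only [List.map_append, List.map_map]
  congr 1
  · congr 1
    refine List.map_congr_left fun j hj => ?_
    simp only [List.mem_range] at hj
    simp (disch := omega) only [Function.comp_apply, wordLetter, if_pos, if_neg,
      Nat.add_sub_cancel_left]
  · rw [show List.range 4 = [0, 1, 2, 3] from rfl]
    simp (disch := omega) only [List.map_cons, List.map_nil, Function.comp_apply, wordLetter,
      if_pos, if_neg]

theorem wordW_length (n : ℕ) : (wordW n).length = 3 * n + 8 := by
  simp [wordW_eq_map]

theorem wordW_repeat_gap {n i d : ℕ} (hd : 0 < d) (hlt : i + d < 3 * n + 8)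
    (h : (wordW n)[i]? = (wordW n)[i + d]?) : d = 2 ∨ d = 3 ∧ (i = 0 ∨ i = 3 * n + 4) := by
  rw [wordW_eq_map, List.getElem?_map, List.getElem?_map, List.getElem?_range (by omega),
    List.getElem?_range hlt, Option.map_some, Option.map_some, Option.some_inj] at h
  simp only [wordLetter, middleLetter] at h
  split_ifs at h <;> simp only [X, Y, Sum.inl.injEq, Sum.inr.injEq, reduceCtorEq] at h <;> omega

theorem wordW_repeat_gap_of_eq_append {n : ℕ} {P s u S : List (ℕ ⊕ ℕ)} (hs : s ≠ [])
    (h : wordW n = P ++ s ++ u ++ s ++ S) :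
    s.length + u.length = 2 ∨
      s.length + u.length = 3 ∧ (P.length = 0 ∨ P.length = 3 * n + 4) := by
  have hlen := congrArg List.length h
  simp only [wordW_length, List.length_append] at hlen
  have := List.length_pos_iff.mpr hs
  exact wordW_repeat_gap (by omega) (by omega) (List.getElem?_length_eq_of_eq_append hs h)

theorem length_flatMap_wordMiddle {m : ℕ} {σ : ℕ ⊕ ℕ → List (ℕ ⊕ ℕ)}
    (h : ∀ k < m, (σ (Y (k+1))).length = 1 ∧ (σ (X (k+3))).length = 1) :
    ((wordMiddle m).flatMap σ).length = 3 * m := by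
  induction m with
  | zero => rfl
  | succ m ih =>
    have hm := h m m.lt_add_one
    simp [wordMiddle_succ, ih fun k hk => h k (by omega), hm.1, hm.2]
    ring

theorem length_flatMap_wordMiddle_of_eq_append {m n : ℕ} {σ : ℕ ⊕ ℕ → List (ℕ ⊕ ℕ)}
    {P S : List (ℕ ⊕ ℕ)} (hσ : ∀ c ∈ wordMiddle m, σ c ≠ []) (hP : P ≠ []) (hS : 2 ≤ S.length)
    (h : wordW n = P ++ (wordMiddle m).flatMap σ ++ S) :
    ((wordMiddle m).flatMap σ).length = 3 * m := by
  refine length_flatMap_wordMiddle fun k hk => ?_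
  obtain ⟨pre, post, hsplit⟩ := wordMiddle_eq_append hk
  have hY := hσ (Y (k+1)) (by simp [hsplit])
  have hX := hσ (X (k+3)) (by simp [hsplit])
  have hgap := wordW_repeat_gap_of_eq_append (n := n) (P := P ++ pre.flatMap σ)
    (u := σ (X (k+3))) (S := post.flatMap σ ++ S) hY (by simp [h, hsplit])
  have hlen := congrArg List.length h
  simp only [hsplit, wordW_length, List.flatMap_append, List.length_append] at hgap hlen
  simp only [List.flatMap_cons, List.flatMap_nil, List.length_append, List.length_nil] at hlen
  have := List.length_pos_iff.mpr hP
  have := List.length_pos_iff.mpr hY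
  have := List.length_pos_iff.mpr hX
  omega

theorem eq_of_flatMap_wordWith_infix_wordW {m n : ℕ} {a b : ℕ ⊕ ℕ}
    {σ : ℕ ⊕ ℕ → List (ℕ ⊕ ℕ)} (hσ : ∀ c ∈ wordWith m a b, σ c ≠ [])
    (h : (wordWith m a b).flatMap σ <:+: wordW n) : m = n := by
  obtain ⟨P, S, hw⟩ := h
  set M := (wordMiddle m).flatMap σ with hM
  have hdecomp : wordW n = P ++ σ (Y 0) ++ (σ a ++ σ b) ++ σ (Y 0) ++ M ++
      σ (Y (m+1)) ++ (σ (X (m+3)) ++ σ (X (m+4))) ++ σ (Y (m+1)) ++ S := by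
    rw [← hw]
    simp [wordWith, ← hM]
  have hlen := congrArg List.length hdecomp
  have hpos : ∀ c ∈ wordWith m a b, 0 < (σ c).length := fun c hc =>
    List.length_pos_iff.mpr (hσ c hc)
  have hy₀ := hpos (Y 0) (by simp [wordWith])
  have ha := hpos a (by simp [wordWith])
  have hb := hpos b (by simp [wordWith])
  have hy := hpos (Y (m+1)) (by simp [wordWith])
  have hx₃ := hpos (X (m+3)) (by simp [wordWith])
  have hx₄ := hpos (X (m+4)) (by simp [wordWith])
  have hfirst := wordW_repeat_gap_of_eq_append (P := P) (u := σ a ++ σ b)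
    (S := M ++ σ (Y (m+1)) ++ σ (X (m+3)) ++ σ (X (m+4)) ++ σ (Y (m+1)) ++ S)
    (hσ (Y 0) (by simp [wordWith])) (by rw [hdecomp]; simp)
  have hlast := wordW_repeat_gap_of_eq_append (P := P ++ σ (Y 0) ++ σ a ++ σ b ++ σ (Y 0) ++ M)
    (u := σ (X (m+3)) ++ σ (X (m+4))) (S := S) (hσ (Y (m+1)) (by simp [wordWith]))
    (by rw [hdecomp]; simp)
  have hmiddle := length_flatMap_wordMiddle_of_eq_append (m := m)
    (P := P ++ σ (Y 0) ++ σ a ++ σ b ++ σ (Y 0))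
    (S := σ (Y (m+1)) ++ σ (X (m+3)) ++ σ (X (m+4)) ++ σ (Y (m+1)) ++ S)
    (fun c hc => hσ c (by simp [wordWith, hc])) (by simp [hσ (Y 0) (by simp [wordWith])])
    (by simp only [List.length_append]; omega) (by rw [hdecomp]; simp [hM])
  rw [← hM] at hmiddle
  simp only [wordW_length, List.length_append] at hfirst hlast hlen
  omega

theorem evalWith_wordWith_eq_none {m n : ℕ} (hmn : m ≠ n) (φ : ℕ ⊕ ℕ → SW (wordW n))
    (a b : ℕ ⊕ ℕ) : evalWith (swMul (wordW n)) none φ (wordWith m a b) = none := by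
  rw [← SW.toList_eq_nil, SW.toList_evalWith_swMul φ (wordWith_ne_nil m a b), if_neg]
  rintro ⟨hσ, hinf⟩
  exact hmn (eq_of_flatMap_wordWith_infix_wordW hσ hinf)

theorem wordW'_not_infix_wordW (n : ℕ) : ¬ wordW' n <:+: wordW n := fun h => by
  have := h.eq_of_length (by simp [wordW, wordW'])
  simp [wordW, wordW', X] at this

theorem stmt13_general (m n : ℕ) :
    (∀ φ : (ℕ ⊕ ℕ) → SW (wordW n),
        evalWith (swMul (wordW n)) none φ (wordW m) =
          evalWith (swMul (wordW n)) none φ (wordW' m)) ↔ n ≠ m := by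
  refine ⟨?_, fun hnm φ => ?_⟩
  · rintro h rfl
    have hid := congrArg SW.toList (h (SW.identityAssignment (wordW n)))
    rw [SW.toList_evalWith_identityAssignment (u := wordW n) (wordWith_ne_nil n _ _),
      SW.toList_evalWith_identityAssignment (u := wordW' n) (wordWith_ne_nil n _ _),
      if_pos (List.infix_refl _), if_neg (wordW'_not_infix_wordW n)] at hid
    exact wordWith_ne_nil n (X 1) (X 2) hid
  · exact (evalWith_wordWith_eq_none hnm.symm φ (X 1) (X 2)).trans
      (evalWith_wordWith_eq_none hnm.symm φ (X 2) (X 1)).symm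

/-- The flat semiring `S(wₙ)` satisfies the identity `wₘ ≈ wₘ'` iff `n ≠ m`. -/
theorem stmt13 (m n : ℕ) (hm : 1 ≤ m) (hn : 1 ≤ n) :
    (∀ φ : (ℕ ⊕ ℕ) → SW (wordW n),
        evalWith (swMul (wordW n)) none φ (wordW m) =
          evalWith (swMul (wordW n)) none φ (wordW' m)) ↔ n ≠ m :=
  stmt13_general m n
end
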